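/- arXiv:1901.00957 — 2 statements merged into one kernel-verified Lean document; each statement's English description precedes it below -/
import Mathlib

section
/- Under the hypotheses of the localized kernel bound (0 < α < 1, β > 0, N dyadic), the frequency-localized solution operator satisfies ‖P_N T_t φ‖_{L^∞(ℝ^n)} ≤ C (N^n / (1 + t^α N^β)) ‖φ‖_{L^1(ℝ^n)} for all φ ∈ L^1(ℝ^n). -/
open MeasureTheory
open scoped RealInnerProductSpace ENNReal

/-- For `0 < α < 1`, `β > 0` and dyadic `N = 2^j`, the frequency-localized solution operator
`P_N T_t φ = K_t^N * φ` satisfies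
`‖P_N T_t φ‖_∞ ≤ C (N^n / (1 + t^α N^β)) ‖φ‖_{L¹}` for every `φ ∈ L¹(ℝ^n)`. -/
theorem localized_operator_L1_Linfty (n : ℕ) (α β : ℝ) (hα₀ : 0 < α) (hα₁ : α < 1)
    (hβ : 0 < β) (Eα : ℂ → ℂ) (C : ℝ) (hC : 0 < C)
    (hE : ∀ s : ℝ, 0 ≤ s → ‖Eα (-Complex.I * s)‖ ≤ C / (1 + s))
    (ψ : ℝ → ℝ) (hψ : ContDiff ℝ (⊤ : ℕ∞) ψ)
    (hψsupp : Function.support ψ ⊆ Set.Icc (1 / 2) 2)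
    (hψ01 : ∀ r, 0 ≤ ψ r ∧ ψ r ≤ 1) :
    ∃ C' > 0, ∀ t : ℝ, 0 < t → ∀ j : ℤ,
      ∀ φ : EuclideanSpace ℝ (Fin n) → ℂ, Integrable φ →
      eLpNorm
        (fun x : EuclideanSpace ℝ (Fin n) =>
          ∫ y : EuclideanSpace ℝ (Fin n),
            (∫ ξ : EuclideanSpace ℝ (Fin n),
              Eα (-Complex.I * ((t ^ α * ‖ξ‖ ^ β : ℝ) : ℂ)) * ((ψ (‖ξ‖ / 2 ^ j) : ℝ) : ℂ) *
                Complex.exp (Complex.I * ((⟪x - y, ξ⟫ : ℝ) : ℂ))) * φ y) ⊤ volume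
      ≤ ENNReal.ofReal (C' * ((2 : ℝ) ^ j) ^ (n : ℕ) / (1 + t ^ α * ((2 : ℝ) ^ j) ^ β)) *
          eLpNorm φ 1 volume := by
  set V : ℝ := (volume (Metric.ball (0 : EuclideanSpace ℝ (Fin n)) 1)).toReal with hVdef
  have hVpos : 0 < V := by
    refine ENNReal.toReal_pos ?_ ?_
    · exact (Metric.measure_ball_pos volume 0 one_pos).ne'
    · exact measure_ball_lt_top.ne
  refine ⟨C * max 1 (2 ^ β) * 2 ^ n * V, by positivity, ?_⟩
  intro t ht j φ hφ
  set N : ℝ := (2 : ℝ) ^ j with hNdef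
  have hNpos : 0 < N := zpow_pos two_pos j
  have htα : (0 : ℝ) ≤ t ^ α := Real.rpow_nonneg ht.le α
  have hNβ : (0 : ℝ) ≤ N ^ β := Real.rpow_nonneg hNpos.le β
  set D : ℝ := 1 + t ^ α * N ^ β with hDdef
  have hDpos : 0 < D := by positivity
  set M : ℝ := C * max 1 (2 ^ β) * 2 ^ n * V * N ^ n / D with hMdef
  have hmax : (0:ℝ) < max 1 (2 ^ β) := lt_max_of_lt_left one_pos
  have hMnonneg : 0 ≤ M := by positivity
  -- Pointwise bound on the kernel
  have hker : ∀ z : EuclideanSpace ℝ (Fin n),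
      ‖∫ ξ : EuclideanSpace ℝ (Fin n),
          Eα (-Complex.I * ((t ^ α * ‖ξ‖ ^ β : ℝ) : ℂ)) * ((ψ (‖ξ‖ / N) : ℝ) : ℂ) *
            Complex.exp (Complex.I * ((⟪z, ξ⟫ : ℝ) : ℂ))‖ ≤ M := by
    intro z
    set S : Set (EuclideanSpace ℝ (Fin n)) := Metric.closedBall 0 (2 * N) with hSdef
    have hSmeas : MeasurableSet S := Metric.isClosed_closedBall.measurableSet
    have hSvol : volume S < ⊤ := measure_closedBall_lt_top
    have hg : Integrable (S.indicator fun _ => C * max 1 (2 ^ β) / D) := by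
      rw [integrable_indicator_iff hSmeas]
      exact integrableOn_const hSvol.ne
    have hbound : ∀ ξ : EuclideanSpace ℝ (Fin n),
        ‖Eα (-Complex.I * ((t ^ α * ‖ξ‖ ^ β : ℝ) : ℂ)) * ((ψ (‖ξ‖ / N) : ℝ) : ℂ) *
            Complex.exp (Complex.I * ((⟪z, ξ⟫ : ℝ) : ℂ))‖ ≤
          S.indicator (fun _ => C * max 1 (2 ^ β) / D) ξ := by
      intro ξ
      by_cases hξ : ψ (‖ξ‖ / N) = 0
      · simp only [hξ, Complex.ofReal_zero, mul_zero, zero_mul, norm_zero]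
        exact Set.indicator_nonneg (fun _ _ => by positivity) ξ
      · have hmem : ‖ξ‖ / N ∈ Set.Icc (1/2 : ℝ) 2 := hψsupp (Function.mem_support.mpr hξ)
        have h1 : N / 2 ≤ ‖ξ‖ := by
          have := hmem.1
          rw [le_div_iff₀ hNpos] at this
          linarith
        have h2 : ‖ξ‖ ≤ 2 * N := by
          have := hmem.2
          rw [div_le_iff₀ hNpos] at this
          linarith
        have hξS : ξ ∈ S := by
          rw [hSdef, Metric.mem_closedBall, dist_zero_right]
          exact h2
        rw [Set.indicator_of_mem hξS]
        set s : ℝ := t ^ α * ‖ξ‖ ^ β with hsdef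
        have hs : 0 ≤ s := mul_nonneg htα (Real.rpow_nonneg (norm_nonneg _) β)
        have hsp : (0:ℝ) < 1 + s := by linarith
        have hnorm : ‖Eα (-Complex.I * ((s : ℝ) : ℂ)) * ((ψ (‖ξ‖ / N) : ℝ) : ℂ) *
            Complex.exp (Complex.I * ((⟪z, ξ⟫ : ℝ) : ℂ))‖ ≤ C / (1 + s) := by
          rw [norm_mul, norm_mul]
          have hexp : ‖Complex.exp (Complex.I * ((⟪z, ξ⟫ : ℝ) : ℂ))‖ = 1 := by
            rw [Complex.norm_exp]
            simp [Complex.mul_re]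
          have hψn : ‖((ψ (‖ξ‖ / N) : ℝ) : ℂ)‖ ≤ 1 := by
            rw [Complex.norm_real, Real.norm_eq_abs,
              abs_of_nonneg (hψ01 (‖ξ‖ / N)).1]
            exact (hψ01 (‖ξ‖ / N)).2
          calc ‖Eα (-Complex.I * ((s : ℝ) : ℂ))‖ * ‖((ψ (‖ξ‖ / N) : ℝ) : ℂ)‖ *
                ‖Complex.exp (Complex.I * ((⟪z, ξ⟫ : ℝ) : ℂ))‖
              ≤ (C / (1 + s)) * 1 * 1 := by
                refine mul_le_mul (mul_le_mul (hE s hs) hψn (norm_nonneg _) ?_)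
                  (le_of_eq hexp) (norm_nonneg _) ?_
                · positivity
                · positivity
            _ = C / (1 + s) := by ring
        refine hnorm.trans ?_
        rw [div_le_div_iff₀ hsp hDpos]
        have hNβle : N ^ β ≤ 2 ^ β * ‖ξ‖ ^ β := by
          rw [← Real.mul_rpow (by norm_num) (norm_nonneg _)]
          exact Real.rpow_le_rpow hNpos.le (by linarith) hβ.le
        have hD : D ≤ max 1 (2 ^ β) * (1 + s) := by
          rw [hDdef, hsdef]
          have h3 : t ^ α * N ^ β ≤ max 1 (2 ^ β) * (t ^ α * ‖ξ‖ ^ β) := by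
            calc t ^ α * N ^ β ≤ t ^ α * (2 ^ β * ‖ξ‖ ^ β) :=
                  mul_le_mul_of_nonneg_left hNβle htα
              _ ≤ max 1 (2 ^ β) * (t ^ α * ‖ξ‖ ^ β) := by
                  rw [show t ^ α * (2 ^ β * ‖ξ‖ ^ β) = 2 ^ β * (t ^ α * ‖ξ‖ ^ β) by ring]
                  exact mul_le_mul_of_nonneg_right (le_max_right _ _)
                    (mul_nonneg htα (Real.rpow_nonneg (norm_nonneg _) β))
          have h4 : (1:ℝ) ≤ max 1 (2 ^ β) := le_max_left _ _
          nlinarith [mul_nonneg htα (Real.rpow_nonneg (norm_nonneg (ξ : EuclideanSpace ℝ (Fin n))) β)]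
        calc C * D ≤ C * (max 1 (2 ^ β) * (1 + s)) :=
              mul_le_mul_of_nonneg_left hD hC.le
          _ = C * max 1 (2 ^ β) * (1 + s) := by ring
    calc ‖∫ ξ : EuclideanSpace ℝ (Fin n),
            Eα (-Complex.I * ((t ^ α * ‖ξ‖ ^ β : ℝ) : ℂ)) * ((ψ (‖ξ‖ / N) : ℝ) : ℂ) *
              Complex.exp (Complex.I * ((⟪z, ξ⟫ : ℝ) : ℂ))‖
        ≤ ∫ ξ, S.indicator (fun _ => C * max 1 (2 ^ β) / D) ξ :=
          norm_integral_le_of_norm_le hg (Filter.Eventually.of_forall hbound)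
      _ = (volume S).toReal • (C * max 1 (2 ^ β) / D) := integral_indicator_const _ hSmeas
      _ = M := by
          rw [hSdef, Measure.addHaar_closedBall volume 0 (by positivity : (0:ℝ) ≤ 2 * N),
            ENNReal.toReal_mul, ENNReal.toReal_ofReal (by positivity),
            finrank_euclideanSpace_fin, smul_eq_mul, hMdef, mul_pow]
          ring
  -- Conclude by Young's inequality (L¹ * L∞)
  have hout : ∀ x : EuclideanSpace ℝ (Fin n),
      ‖∫ y : EuclideanSpace ℝ (Fin n),
          (∫ ξ : EuclideanSpace ℝ (Fin n),
            Eα (-Complex.I * ((t ^ α * ‖ξ‖ ^ β : ℝ) : ℂ)) * ((ψ (‖ξ‖ / N) : ℝ) : ℂ) *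
              Complex.exp (Complex.I * ((⟪x - y, ξ⟫ : ℝ) : ℂ))) * φ y‖
        ≤ M * ∫ y, ‖φ y‖ := by
    intro x
    have : ∀ y : EuclideanSpace ℝ (Fin n),
        ‖(∫ ξ : EuclideanSpace ℝ (Fin n),
            Eα (-Complex.I * ((t ^ α * ‖ξ‖ ^ β : ℝ) : ℂ)) * ((ψ (‖ξ‖ / N) : ℝ) : ℂ) *
              Complex.exp (Complex.I * ((⟪x - y, ξ⟫ : ℝ) : ℂ))) * φ y‖ ≤ M * ‖φ y‖ := by
      intro y
      rw [norm_mul]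
      exact mul_le_mul_of_nonneg_right (hker (x - y)) (norm_nonneg _)
    calc ‖∫ y : EuclideanSpace ℝ (Fin n),
            (∫ ξ : EuclideanSpace ℝ (Fin n),
              Eα (-Complex.I * ((t ^ α * ‖ξ‖ ^ β : ℝ) : ℂ)) * ((ψ (‖ξ‖ / N) : ℝ) : ℂ) *
                Complex.exp (Complex.I * ((⟪x - y, ξ⟫ : ℝ) : ℂ))) * φ y‖
        ≤ ∫ y, M * ‖φ y‖ :=
          norm_integral_le_of_norm_le (hφ.norm.const_mul M) (Filter.Eventually.of_forall this)
      _ = M * ∫ y, ‖φ y‖ := integral_const_mul M _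
  have hL1 : ENNReal.ofReal (∫ y, ‖φ y‖) = eLpNorm φ 1 volume := by
    rw [eLpNorm_one_eq_lintegral_enorm]
    exact ofReal_integral_norm_eq_lintegral_enorm hφ
  calc eLpNorm
        (fun x : EuclideanSpace ℝ (Fin n) =>
          ∫ y : EuclideanSpace ℝ (Fin n),
            (∫ ξ : EuclideanSpace ℝ (Fin n),
              Eα (-Complex.I * ((t ^ α * ‖ξ‖ ^ β : ℝ) : ℂ)) * ((ψ (‖ξ‖ / N) : ℝ) : ℂ) *
                Complex.exp (Complex.I * ((⟪x - y, ξ⟫ : ℝ) : ℂ))) * φ y) ⊤ volume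
      ≤ ENNReal.ofReal (M * ∫ y, ‖φ y‖) := by
        rw [eLpNorm_exponent_top]
        exact eLpNormEssSup_le_of_ae_bound (Filter.Eventually.of_forall hout)
    _ = ENNReal.ofReal M * ENNReal.ofReal (∫ y, ‖φ y‖) :=
        ENNReal.ofReal_mul hMnonneg
    _ = ENNReal.ofReal (C * max 1 (2 ^ β) * 2 ^ n * V * N ^ (n:ℕ) / (1 + t ^ α * N ^ β)) *
          eLpNorm φ 1 volume := by rw [hL1, hMdef, hDdef]
end

section
/- There exist constants C > 0 and δ > 0 such that for all sufficiently small η > 0, |∫_{2η}^{1} t^{-1} t^{(2-n)/2} J_{(n-2)/2}(t) dt| ≥ C |log η| - δ, i.e. this integral grows like ln(1/η) as η → 0⁺. -/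
/-!
For `ν > -1` the Bessel series is dominated termwise, through
`Γ(k + ν + 1) ≥ Γ(ν + 1) (ν + 1)ᵏ`, by its leading term `(t/2)^ν / Γ(ν + 1)` times the
exponential series of `(t/2)² / (ν + 1)`. For `ν = (n - 2)/2 ≥ -1/2` and `0 < t ≤ 1` this puts
`J_ν(t)` between `2 - e^{1/2} > 0` and `e^{1/2}` times its leading term, so the integrand is
comparable to `2^{-ν} / (Γ(ν + 1) t)`, whose integral over `[2η, 1]` is a multiple of
`log (1 / (2η))`.
-/

/-- The Bessel function of the first kind, defined by its power series. -/
noncomputable def besselJ (ν z : ℝ) : ℝ :=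
  ∑' k : ℕ, (-1 : ℝ) ^ k * (z / 2) ^ (ν + 2 * k) / (Real.Gamma (k + 1) * Real.Gamma (k + ν + 1))

open Real MeasureTheory Set
open scoped Nat

noncomputable def besselJTerm (ν t : ℝ) (k : ℕ) : ℝ :=
  (-1 : ℝ) ^ k * (t / 2) ^ (ν + 2 * k) / (Gamma (k + 1) * Gamma (k + ν + 1))

lemma besselJ_eq_tsum (ν t : ℝ) : besselJ ν t = ∑' k, besselJTerm ν t k := rfl

@[fun_prop]
lemma measurable_besselJ (ν : ℝ) : Measurable (besselJ ν) :=
  Measurable.tsum fun _ => by fun_prop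

lemma besselJTerm_zero (ν t : ℝ) : besselJTerm ν t 0 = (t / 2) ^ ν / Gamma (ν + 1) := by
  simp [besselJTerm]

lemma Gamma_mul_pow_le_Gamma_add {ν : ℝ} (hν : -1 < ν) (k : ℕ) :
    Gamma (ν + 1) * (ν + 1) ^ k ≤ Gamma (k + ν + 1) := by
  induction k with
  | zero => simp
  | succ k ih =>
    have hk : (0 : ℝ) < k + ν + 1 := by linarith [k.cast_nonneg (α := ℝ)]
    have hΓ : 0 < Gamma (ν + 1) := Gamma_pos_of_pos (by linarith)
    calc Gamma (ν + 1) * (ν + 1) ^ (k + 1) = (ν + 1) * (Gamma (ν + 1) * (ν + 1) ^ k) := by ring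
      _ ≤ (k + ν + 1) * Gamma (k + ν + 1) :=
          mul_le_mul (by linarith) ih (mul_nonneg hΓ.le (pow_nonneg (by linarith) k)) hk.le
      _ = Gamma ((k + 1 : ℕ) + ν + 1) := by
          rw [← Gamma_add_one hk.ne']; push_cast; ring_nf

lemma abs_besselJTerm_le {ν t : ℝ} (hν : -1 < ν) (ht : 0 < t) (k : ℕ) :
    |besselJTerm ν t k| ≤ (t / 2) ^ ν / Gamma (ν + 1) * (((t / 2) ^ 2 / (ν + 1)) ^ k / k !) := by
  have hΓ : 0 < Gamma (ν + 1) := Gamma_pos_of_pos (by linarith)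
  have hν1 : 0 < ν + 1 := by linarith
  have hpow : (t / 2) ^ (ν + 2 * k) = (t / 2) ^ ν * ((t / 2) ^ 2) ^ k := by
    rw [rpow_add (by positivity), ← pow_mul, ← rpow_natCast]; push_cast; rfl
  have hΓk : 0 < Gamma (k + ν + 1) := Gamma_pos_of_pos (by linarith [k.cast_nonneg (α := ℝ)])
  rw [besselJTerm, abs_div, abs_mul, abs_pow, abs_neg, abs_one, one_pow, one_mul, hpow,
    abs_of_pos (by positivity), Gamma_nat_eq_factorial, abs_of_pos (by positivity)]
  calc (t / 2) ^ ν * ((t / 2) ^ 2) ^ k / (k ! * Gamma (k + ν + 1))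
      ≤ (t / 2) ^ ν * ((t / 2) ^ 2) ^ k / (k ! * (Gamma (ν + 1) * (ν + 1) ^ k)) := by
        gcongr; exact Gamma_mul_pow_le_Gamma_add hν k
    _ = _ := by rw [div_pow ((t / 2) ^ 2)]; field_simp

lemma abs_besselJ_sub_le {ν t : ℝ} (hν : -1 < ν) (ht : 0 < t) :
    |besselJ ν t - (t / 2) ^ ν / Gamma (ν + 1)| ≤
      (t / 2) ^ ν / Gamma (ν + 1) * (exp ((t / 2) ^ 2 / (ν + 1)) - 1) := by
  set c := (t / 2) ^ ν / Gamma (ν + 1)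
  set x := (t / 2) ^ 2 / (ν + 1)
  have hexp : HasSum (fun k => c * (x ^ k / k !)) (c * exp x) := by
    rw [exp_eq_exp_ℝ]; exact (NormedSpace.expSeries_div_hasSum_exp x).mul_left c
  have hsum : Summable (besselJTerm ν t) :=
    hexp.summable.of_norm_bounded fun k => abs_besselJTerm_le hν ht k
  have htail : HasSum (fun k => c * (x ^ (k + 1) / (k + 1)!)) (c * exp x - c) := by
    simpa using (hasSum_nat_add_iff' 1).mpr hexp
  rw [besselJ_eq_tsum, hsum.tsum_eq_zero_add, besselJTerm_zero, add_sub_cancel_left, mul_sub,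
    mul_one]
  exact tsum_of_norm_bounded (f := fun k => besselJTerm ν t (k + 1)) htail
    fun k => abs_besselJTerm_le hν ht (k + 1)

lemma exp_half_lt_two : exp (1 / 2) < 2 :=
  calc exp (1 / 2) < exp (log 2) := exp_lt_exp.mpr (by linarith [log_two_gt_d9])
    _ = 2 := exp_log two_pos

lemma besselJ_mem_Icc {ν t : ℝ} (hν : -1 / 2 ≤ ν) (ht₀ : 0 < t) (ht₁ : t ≤ 1) :
    besselJ ν t ∈ Icc ((2 - exp (1 / 2)) * ((t / 2) ^ ν / Gamma (ν + 1)))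
      (exp (1 / 2) * ((t / 2) ^ ν / Gamma (ν + 1))) := by
  have hc : 0 ≤ (t / 2) ^ ν / Gamma (ν + 1) :=
    div_nonneg (by positivity) (Gamma_pos_of_pos (by linarith)).le
  have hx : (t / 2) ^ 2 / (ν + 1) ≤ 1 / 2 := by
    rw [div_le_iff₀ (by linarith)]; nlinarith
  have hexp := exp_le_exp.mpr hx
  have := abs_le.mp (abs_besselJ_sub_le (ν := ν) (by linarith) ht₀)
  constructor <;> nlinarith

lemma rpow_neg_mul_div_two_rpow {t : ℝ} (ht : 0 < t) (ν : ℝ) :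
    t ^ (-ν) * (t / 2) ^ ν = 2 ^ (-ν) := by
  rw [div_rpow ht.le zero_le_two, rpow_neg ht.le, rpow_neg zero_le_two]
  field_simp [(rpow_pos_of_pos ht ν).ne']

lemma mul_log_div_le_integral {f : ℝ → ℝ} {a b m M : ℝ} (ha : 0 < a) (hab : a ≤ b)
    (hf : Measurable f) (hm : 0 ≤ m) (hbound : ∀ t ∈ Icc a b, m * t⁻¹ ≤ f t ∧ f t ≤ M * t⁻¹) :
    m * log (b / a) ≤ ∫ t in a..b, f t := by
  have hinv : ∀ c : ℝ, IntervalIntegrable (fun t => c * t⁻¹) volume a b := fun c =>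
    (continuousOn_const.mul (continuousOn_inv₀.mono fun t ht =>
      (ha.trans_le (uIcc_of_le hab ▸ ht).1).ne')).intervalIntegrable
  have hfint : IntervalIntegrable f volume a b := by
    refine (hinv M).mono_fun' hf.aestronglyMeasurable ?_
    rw [uIoc_of_le hab]
    filter_upwards [ae_restrict_mem measurableSet_Ioc] with t ht
    obtain ⟨hlo, hhi⟩ := hbound t (Ioc_subset_Icc_self ht)
    have hpos : 0 ≤ f t := (mul_nonneg hm (inv_nonneg.mpr (ha.trans ht.1).le)).trans hlo
    rwa [Real.norm_eq_abs, abs_of_nonneg hpos]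
  calc m * log (b / a) = ∫ t in a..b, m * t⁻¹ := by
        rw [intervalIntegral.integral_const_mul, integral_inv_of_pos ha (ha.trans_le hab)]
    _ ≤ ∫ t in a..b, f t :=
        intervalIntegral.integral_mono_on hab (hinv m) hfint fun t ht => (hbound t ht).1

lemma mul_neg_log_le_integral_besselJ {ν a : ℝ} (hν : -1 / 2 ≤ ν) (ha₀ : 0 < a) (ha₁ : a ≤ 1) :
    (2 - exp (1 / 2)) * (2 ^ (-ν) / Gamma (ν + 1)) * -log a ≤
      ∫ t in a..1, t⁻¹ * t ^ (-ν) * besselJ ν t := by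
  rw [← log_inv, ← one_div]
  have hΓ : 0 < Gamma (ν + 1) := Gamma_pos_of_pos (by linarith)
  refine mul_log_div_le_integral (M := exp (1 / 2) * (2 ^ (-ν) / Gamma (ν + 1))) ha₀ ha₁
    (by fun_prop) (mul_nonneg (sub_pos.mpr exp_half_lt_two).le (by positivity)) fun t ht => ?_
  have ht₀ : 0 < t := ha₀.trans_le ht.1
  obtain ⟨hlo, hhi⟩ := besselJ_mem_Icc hν ht₀ ht.2
  have hscale : 0 ≤ t⁻¹ * t ^ (-ν) := by positivity
  have key := rpow_neg_mul_div_two_rpow ht₀ ν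
  constructor
  · calc _ = t⁻¹ * t ^ (-ν) * ((2 - exp (1 / 2)) * ((t / 2) ^ ν / Gamma (ν + 1))) := by
          rw [← key]; ring
      _ ≤ _ := mul_le_mul_of_nonneg_left hlo hscale
  · calc _ ≤ t⁻¹ * t ^ (-ν) * (exp (1 / 2) * ((t / 2) ^ ν / Gamma (ν + 1))) :=
          mul_le_mul_of_nonneg_left hhi hscale
      _ = _ := by rw [← key]; ring

/-- The integral `∫_{2η}^1 t^{-1} t^{(2-n)/2} J_{(n-2)/2}(t) dt` grows like `ln(1/η)`
as `η → 0⁺`. -/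
theorem bessel_integral_log_divergence (n : ℕ) (hn : 1 ≤ n) :
    ∃ C > 0, ∃ δ > 0, ∃ η₀ > 0, ∀ η : ℝ, 0 < η → η < η₀ →
      C * |Real.log η| - δ ≤
        |∫ t in (2 * η)..1, t⁻¹ * t ^ (((2 : ℝ) - n) / 2) * besselJ (((n : ℝ) - 2) / 2) t| := by
  have hn' : (1 : ℝ) ≤ n := by exact_mod_cast hn
  set ν : ℝ := ((n : ℝ) - 2) / 2 with hν_def
  have hν : -1 / 2 ≤ ν := by rw [hν_def]; linarith
  have hΓ : 0 < Gamma (ν + 1) := Gamma_pos_of_pos (by linarith)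
  set C := (2 - exp (1 / 2)) * (2 ^ (-ν) / Gamma (ν + 1))
  have hC : 0 < C := mul_pos (sub_pos.mpr exp_half_lt_two) (by positivity)
  refine ⟨C, hC, C * log 2, mul_pos hC (log_pos one_lt_two), 1 / 2, one_half_pos,
    fun η hη hη₀ => ?_⟩
  have hlog : -log (2 * η) = |log η| - log 2 := by
    rw [abs_of_neg (log_neg hη (by linarith)), log_mul two_ne_zero hη.ne']; ring
  rw [show ((2 : ℝ) - n) / 2 = -ν by ring]
  calc C * |log η| - C * log 2 = C * -log (2 * η) := by rw [hlog]; ring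
    _ ≤ _ := mul_neg_log_le_integral_besselJ hν (by positivity) (by linarith)
    _ ≤ _ := le_abs_self _
end
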